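/- Let E₁₂, E₂₃, E₃₁ be a compatible triplet of essential matrices (Eᵢⱼ = Rᵢ [bᵢ − bⱼ]× Rⱼᵀ with Rᵢ ∈ SO(3), bᵢ ∈ ℝ³). Then for all distinct i, j, k ∈ {1,2,3}: Eᵢⱼᵀ Eᵢⱼ Eⱼₖ − (1/2)tr(Eᵢⱼᵀ Eᵢⱼ)·Eⱼₖ + Eᵢⱼ* Eₖᵢᵀ = 0, where Eⱼᵢ = Eᵢⱼᵀ and * denotes the adjugate. -/

import Mathlib

/-!
Conjugation by rotations reduces everything to `Rᵢ = 1`: with `u = bᵢ − bⱼ`, `v = bⱼ − bₖ`,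
`w = bₖ − bᵢ`, the left-hand side is `Rⱼ ([u]×ᵀ[u]×[v]× − |u|²[v]× + adj([u]×)[w]×ᵀ) Rₖᵀ`, because
`adj` reverses products and fixes rotations. For a cross-product matrix `[u]×ᵀ[u]× = |u|² I − u uᵀ`
and `adj [u]× = u uᵀ`, so the bracket collapses to `−u uᵀ [v + w]× = u uᵀ [u]× = 0`.
-/

open Matrix

/-- The cross-product matrix of a vector `a ∈ ℝ³`. -/
def skew (a : Fin 3 → ℝ) : Matrix (Fin 3) (Fin 3) ℝ :=
  !![0, -a 2, a 1; a 2, 0, -a 0; -a 1, a 0, 0]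

def cubicConstraint {K n : Type*} [Field K] [Fintype n] [DecidableEq n] (A B C : Matrix n n K) :
    Matrix n n K :=
  Aᵀ * A * B - (1 / 2 * trace (Aᵀ * A)) • B + A.adjugate * Cᵀ

section Orthogonal

variable {K n : Type*} [Fintype n] [DecidableEq n]

lemma adjugate_eq_transpose_of_mul_transpose_eq_one [CommRing K] {P : Matrix n n K}
    (hP : P * Pᵀ = 1) (hdet : P.det = 1) : P.adjugate = Pᵀ := by
  have : P * P.adjugate = 1 := by rw [mul_adjugate, hdet, one_smul]
  calc P.adjugate = P.adjugate * (P * Pᵀ) := by rw [hP, mul_one]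
    _ = Pᵀ := by rw [← mul_assoc, mul_eq_one_comm.mp this, one_mul]

lemma trace_mul_mul_transpose [CommRing K] {Q : Matrix n n K} (hQ : Q * Qᵀ = 1)
    (X : Matrix n n K) : trace (Q * X * Qᵀ) = trace X := by
  rw [trace_mul_comm, ← mul_assoc, mul_eq_one_comm.mp hQ, one_mul]

theorem cubicConstraint_conj [Field K] {P Q : Matrix n n K} (hP : P * Pᵀ = 1) (hQ : Q * Qᵀ = 1)
    (hPdet : P.det = 1) (hQdet : Q.det = 1) (W S T U : Matrix n n K) :
    cubicConstraint (P * S * Qᵀ) (Q * T * Wᵀ) (W * U * Pᵀ) = Q * cubicConstraint S T U * Wᵀ := by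
  have hP' : Pᵀ * P = 1 := mul_eq_one_comm.mp hP
  have hQ' : Qᵀ * Q = 1 := mul_eq_one_comm.mp hQ
  have gram : (P * S * Qᵀ)ᵀ * (P * S * Qᵀ) = Q * (Sᵀ * S) * Qᵀ := by
    simp only [transpose_mul, transpose_transpose, mul_assoc, ← mul_assoc Pᵀ P, hP', one_mul]
  have adj : (P * S * Qᵀ).adjugate = Q * S.adjugate * Pᵀ := by
    rw [adjugate_mul_distrib, adjugate_mul_distrib,
      adjugate_eq_transpose_of_mul_transpose_eq_one hP hPdet,
      adjugate_eq_transpose_of_mul_transpose_eq_one (by rwa [transpose_transpose])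
        (by rwa [det_transpose]),
      transpose_transpose, mul_assoc]
  rw [cubicConstraint, cubicConstraint, gram, adj, trace_mul_mul_transpose hQ]
  simp only [transpose_mul, transpose_transpose, Matrix.mul_add, Matrix.add_mul, Matrix.mul_sub,
    Matrix.sub_mul, Matrix.mul_smul, Matrix.smul_mul, mul_assoc, ← mul_assoc Qᵀ Q,
    ← mul_assoc Pᵀ P, hP', hQ', one_mul]

end Orthogonal

section Skew

variable (a b : Fin 3 → ℝ)

lemma skew_add : skew (a + b) = skew a + skew b := by
  ext i j; fin_cases i <;> fin_cases j <;> simp [skew] <;> ring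

lemma skew_neg : skew (-a) = -skew a := by
  ext i j; fin_cases i <;> fin_cases j <;> simp [skew]

lemma transpose_skew : (skew a)ᵀ = -skew a := by
  ext i j; fin_cases i <;> fin_cases j <;> simp [skew]

lemma transpose_skew_mul_skew : (skew a)ᵀ * skew a = (a ⬝ᵥ a) • 1 - vecMulVec a a := by
  ext i j; fin_cases i <;> fin_cases j <;>
    simp [skew, Matrix.mul_apply, Fin.sum_univ_three, dotProduct, vecMulVec_apply] <;> ring

lemma trace_transpose_skew_mul_skew : trace ((skew a)ᵀ * skew a) = 2 * (a ⬝ᵥ a) := by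
  rw [transpose_skew_mul_skew, trace_sub, trace_smul, trace_one, trace_vecMulVec]
  simp only [Fintype.card_fin, Nat.cast_ofNat, smul_eq_mul]
  ring

lemma adjugate_skew : (skew a).adjugate = vecMulVec a a := by
  ext i j; fin_cases i <;> fin_cases j <;>
    simp [skew, adjugate_fin_three, vecMulVec_apply] <;> ring

lemma vecMulVec_self_mul_skew_self : vecMulVec a a * skew a = 0 := by
  ext i j; fin_cases i <;> fin_cases j <;>
    simp [skew, Matrix.mul_apply, Fin.sum_univ_three, vecMulVec_apply] <;> ring

end Skew

theorem cubicConstraint_skew {u v w : Fin 3 → ℝ} (h : u + v + w = 0) :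
    cubicConstraint (skew u) (skew v) (skew w) = 0 := by
  have hw : skew w = -skew u - skew v := by
    rw [eq_neg_of_add_eq_zero_right h, skew_neg, skew_add]; abel
  rw [cubicConstraint, trace_transpose_skew_mul_skew, transpose_skew_mul_skew, adjugate_skew,
    transpose_skew, hw]
  simp only [Matrix.sub_mul, Matrix.mul_neg, Matrix.mul_sub, smul_mul, one_mul,
    vecMulVec_self_mul_skew_self]
  module

/-- For a compatible triplet of essential matrices `Eᵢⱼ = Rᵢ [bᵢ − bⱼ]× Rⱼᵀ` and all
distinct `i, j, k`: `Eᵢⱼᵀ Eᵢⱼ Eⱼₖ − (1/2)tr(Eᵢⱼᵀ Eᵢⱼ)·Eⱼₖ + Eᵢⱼ* Eₖᵢᵀ = 0`. -/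
theorem compatible_triplet_cubic_constraints
    (R : Fin 3 → Matrix (Fin 3) (Fin 3) ℝ) (b : Fin 3 → Fin 3 → ℝ)
    (hR : ∀ i, R i * (R i)ᵀ = 1) (hRdet : ∀ i, (R i).det = 1)
    (E : Fin 3 → Fin 3 → Matrix (Fin 3) (Fin 3) ℝ)
    (hE : ∀ i j, E i j = R i * skew (b i - b j) * (R j)ᵀ) :
    ∀ i j k : Fin 3, i ≠ j → j ≠ k → k ≠ i →
      (E i j)ᵀ * E i j * E j k
        - ((1 : ℝ) / 2 * Matrix.trace ((E i j)ᵀ * E i j)) • E j k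
        + (E i j).adjugate * (E k i)ᵀ = 0 := by
  intro i j k _ _ _
  have hsum : (b i - b j) + (b j - b k) + (b k - b i) = 0 := by abel
  change cubicConstraint (E i j) (E j k) (E k i) = 0
  rw [hE i j, hE j k, hE k i, cubicConstraint_conj (hR i) (hR j) (hRdet i) (hRdet j),
    cubicConstraint_skew hsum, Matrix.mul_zero, Matrix.zero_mul]
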